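/- Let K be a field and m ≥ n. Then the annihilator of tensor space in the Brauer algebra is contained in the ideal generated by e_1: ann_{B_n(−2m)}(V^{⊗n}) ⊆ B^{(1)}, where B^{(1)} is the two-sided ideal of B_n(−2m) generated by e_1. -/

import Mathlib

open scoped BigOperators Classical
open MulOpposite

noncomputable section

namespace SpBrauer

/-- the conjugate index `i' = 2m-1-i` (0-based version of `2m+1-i`). -/
def conjIdx (m : ℕ) (i : Fin (2*m)) : Fin (2*m) :=
  ⟨2*m - 1 - (i : ℕ), by have := i.isLt; omega⟩

/-- the sign `ε_{ij}`. -/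
def epsZ (m : ℕ) (i j : Fin (2*m)) : ℤ :=
  if (i : ℕ) + (j : ℕ) + 1 = 2*m then (if (i : ℕ) < (j : ℕ) then 1 else -1) else 0

/-- tensor space `V^{⊗ n}` modelled as the free module on multi-indices. -/
abbrev Ten (R : Type) (m n : ℕ) : Type := (Fin n → Fin (2*m)) → R

/-- basis tensor `v_{i_1} ⊗ ⋯ ⊗ v_{i_n}`. -/
def dta (R : Type) [CommRing R] (m n : ℕ) (i : Fin n → Fin (2*m)) : Ten R m n :=
  fun a => if a = i then 1 else 0

/-- the linear map on free modules with "matrix" `M`. -/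
def funMap (R : Type) [CommRing R] (α β : Type) [Fintype α]
    (M : β → α → R) : (α → R) →ₗ[R] (β → R) where
  toFun f := fun b => ∑ a, M b a * f a
  map_add' f g := by
    funext b
    simp [Pi.add_apply, mul_add, Finset.sum_add_distrib]
  map_smul' c f := by
    funext b
    simp only [Pi.smul_apply, smul_eq_mul, RingHom.id_apply]
    rw [Finset.mul_sum]
    exact Finset.sum_congr rfl (fun a _ => by ring)

/-- the operator given by the right action of the Brauer algebra generator `s_j`
(`j` is 0-based: `s_j` swaps positions `j` and `j+1` with a sign). -/
def sOp (R : Type) [CommRing R] (m n : ℕ) (j : Fin (n-1)) :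
    Ten R m n →ₗ[R] Ten R m n :=
  funMap R _ _ (fun a b =>
    if b = a ∘ (Equiv.swap (⟨(j:ℕ), by have := j.isLt; omega⟩ : Fin n)
        (⟨(j:ℕ)+1, by have := j.isLt; omega⟩ : Fin n)) then -1 else 0)

/-- the operator given by the right action of the Brauer algebra generator `e_j`. -/
def eOp (R : Type) [CommRing R] (m n : ℕ) (j : Fin (n-1)) :
    Ten R m n →ₗ[R] Ten R m n :=
  funMap R _ _ (fun a b =>
    (if ∀ p : Fin n, p ≠ (⟨(j:ℕ), by have := j.isLt; omega⟩ : Fin n) →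
        p ≠ (⟨(j:ℕ)+1, by have := j.isLt; omega⟩ : Fin n) → b p = a p then 1 else 0) *
    (-((epsZ m (a ⟨(j:ℕ), by have := j.isLt; omega⟩) (a ⟨(j:ℕ)+1, by have := j.isLt; omega⟩) : ℤ) : R)) *
    ((epsZ m (b ⟨(j:ℕ), by have := j.isLt; omega⟩) (b ⟨(j:ℕ)+1, by have := j.isLt; omega⟩) : ℤ) : R))

/-- the (sign-twisted) right place-permutation action of a permutation on tensor space. -/
def permOp (R : Type) [CommRing R] (m n : ℕ) (π : Equiv.Perm (Fin n)) :
    Ten R m n →ₗ[R] Ten R m n :=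
  funMap R _ _ (fun a b => if b = a ∘ π then ((Equiv.Perm.sign π : ℤ) : R) else 0)

/-- the `n`-fold tensor power of (the endomorphism of `V` given by) a matrix `g`,
acting diagonally on tensor space. -/
def tenOp (R : Type) [CommRing R] (m n : ℕ) (g : Matrix (Fin (2*m)) (Fin (2*m)) R) :
    Ten R m n →ₗ[R] Ten R m n :=
  funMap R _ _ (fun a b => ∏ k : Fin n, g (a k) (b k))

/-- the skew-symmetric bilinear form `(v,w)` determined by `(v_i, v_j) = ε_{ij}`. -/
def sform (R : Type) [CommRing R] (m : ℕ) (v w : Fin (2*m) → R) : R :=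
  ∑ i, ∑ j, v i * ((epsZ m i j : ℤ) : R) * w j

/-- membership in the symplectic group `Sp(V)` (an invertible linear map preserving the form). -/
def IsSymp (R : Type) [CommRing R] (m : ℕ) (g : Matrix (Fin (2*m)) (Fin (2*m)) R) : Prop :=
  IsUnit g.det ∧ ∀ v w, sform R m (g.mulVec v) (g.mulVec w) = sform R m v w

/-- membership in the symplectic similitude group `GSp(V)`. -/
def IsGSymp (R : Type) [CommRing R] (m : ℕ) (g : Matrix (Fin (2*m)) (Fin (2*m)) R) : Prop :=
  IsUnit g.det ∧ ∃ d : R, d ≠ 0 ∧ ∀ v w, sform R m (g.mulVec v) (g.mulVec w) = d * sform R m v w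

/-! ### The Brauer algebra, by generators and relations -/

/-- generators of the Brauer algebra `B_n(x)`:  `s i` and `e i` for `i = 0, …, n-2`
(0-based versions of `s_1, …, s_{n-1}`, `e_1, …, e_{n-1}`). -/
inductive BGen (n : ℕ) : Type
  | s : Fin (n-1) → BGen n
  | e : Fin (n-1) → BGen n

/-- the defining relations of the Brauer algebra `B_n(x)`. -/
inductive BRel (R : Type) [CommRing R] (x : R) (n : ℕ) :
    FreeAlgebra R (BGen n) → FreeAlgebra R (BGen n) → Prop
  | ss (i : Fin (n-1)) :
      BRel R x n (FreeAlgebra.ι R (BGen.s i) * FreeAlgebra.ι R (BGen.s i)) 1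
  | ee (i : Fin (n-1)) :
      BRel R x n (FreeAlgebra.ι R (BGen.e i) * FreeAlgebra.ι R (BGen.e i))
        (x • FreeAlgebra.ι R (BGen.e i))
  | es (i : Fin (n-1)) :
      BRel R x n (FreeAlgebra.ι R (BGen.e i) * FreeAlgebra.ι R (BGen.s i))
        (FreeAlgebra.ι R (BGen.e i))
  | se (i : Fin (n-1)) :
      BRel R x n (FreeAlgebra.ι R (BGen.s i) * FreeAlgebra.ι R (BGen.e i))
        (FreeAlgebra.ι R (BGen.e i))
  | ssComm (i j : Fin (n-1)) (h : (i:ℕ)+1 < (j:ℕ)) :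
      BRel R x n (FreeAlgebra.ι R (BGen.s i) * FreeAlgebra.ι R (BGen.s j))
        (FreeAlgebra.ι R (BGen.s j) * FreeAlgebra.ι R (BGen.s i))
  | seComm (i j : Fin (n-1)) (h : (i:ℕ)+1 < (j:ℕ)) :
      BRel R x n (FreeAlgebra.ι R (BGen.s i) * FreeAlgebra.ι R (BGen.e j))
        (FreeAlgebra.ι R (BGen.e j) * FreeAlgebra.ι R (BGen.s i))
  | eeComm (i j : Fin (n-1)) (h : (i:ℕ)+1 < (j:ℕ)) :
      BRel R x n (FreeAlgebra.ι R (BGen.e i) * FreeAlgebra.ι R (BGen.e j))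
        (FreeAlgebra.ι R (BGen.e j) * FreeAlgebra.ι R (BGen.e i))
  | braid (i j : Fin (n-1)) (h : (j:ℕ) = (i:ℕ)+1) :
      BRel R x n
        (FreeAlgebra.ι R (BGen.s i) * FreeAlgebra.ι R (BGen.s j) * FreeAlgebra.ι R (BGen.s i))
        (FreeAlgebra.ι R (BGen.s j) * FreeAlgebra.ι R (BGen.s i) * FreeAlgebra.ι R (BGen.s j))
  | eje (i j : Fin (n-1)) (h : (j:ℕ) = (i:ℕ)+1) :
      BRel R x n
        (FreeAlgebra.ι R (BGen.e i) * FreeAlgebra.ι R (BGen.e j) * FreeAlgebra.ι R (BGen.e i))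
        (FreeAlgebra.ι R (BGen.e i))
  | eje' (i j : Fin (n-1)) (h : (j:ℕ) = (i:ℕ)+1) :
      BRel R x n
        (FreeAlgebra.ι R (BGen.e j) * FreeAlgebra.ι R (BGen.e i) * FreeAlgebra.ι R (BGen.e j))
        (FreeAlgebra.ι R (BGen.e j))
  | see (i j : Fin (n-1)) (h : (j:ℕ) = (i:ℕ)+1) :
      BRel R x n
        (FreeAlgebra.ι R (BGen.s i) * FreeAlgebra.ι R (BGen.e j) * FreeAlgebra.ι R (BGen.e i))
        (FreeAlgebra.ι R (BGen.s j) * FreeAlgebra.ι R (BGen.e i))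
  | ees (i j : Fin (n-1)) (h : (j:ℕ) = (i:ℕ)+1) :
      BRel R x n
        (FreeAlgebra.ι R (BGen.e j) * FreeAlgebra.ι R (BGen.e i) * FreeAlgebra.ι R (BGen.s j))
        (FreeAlgebra.ι R (BGen.e j) * FreeAlgebra.ι R (BGen.s i))

/-- the Brauer algebra `B_n(x)` over `R`, presented by generators and relations. -/
abbrev BrauerAlg (R : Type) [CommRing R] (x : R) (n : ℕ) : Type := RingQuot (BRel R x n)

/-- the generator `s_i` of the Brauer algebra (0-based index). -/
def bS (R : Type) [CommRing R] (x : R) (n : ℕ) (i : Fin (n-1)) : BrauerAlg R x n :=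
  RingQuot.mkAlgHom R (BRel R x n) (FreeAlgebra.ι R (BGen.s i))

/-- the generator `e_i` of the Brauer algebra (0-based index). -/
def bE (R : Type) [CommRing R] (x : R) (n : ℕ) (i : Fin (n-1)) : BrauerAlg R x n :=
  RingQuot.mkAlgHom R (BRel R x n) (FreeAlgebra.ι R (BGen.e i))

/-- the element `E_f = e_1 e_3 ⋯ e_{2f-1}` of the Brauer algebra. -/
def EfB (R : Type) [CommRing R] (x : R) (n f : ℕ) (hf : 2*f ≤ n) : BrauerAlg R x n :=
  (List.ofFn (fun i : Fin f => bE R x n ⟨2*(i:ℕ), by have := i.isLt; omega⟩)).prod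

/-- the two-sided ideal `B^{(f)}` of the Brauer algebra generated by `E_f`
(it is `0` when `2f > n`, matching the convention of the paper). -/
def Bideal (R : Type) [CommRing R] (x : R) (n f : ℕ) : Submodule R (BrauerAlg R x n) :=
  Submodule.span R {y | ∃ (hf : 2*f ≤ n) (a b : BrauerAlg R x n), y = a * EfB R x n f hf * b}

/-- the operator on tensor space given by the right action of `E_f = e_1e_3⋯e_{2f-1}`. -/
def EfOp (R : Type) [CommRing R] (m n f : ℕ) (hf : 2*f ≤ n) :
    Module.End R (Ten R m n) :=
  (List.ofFn (fun i : Fin f => eOp R m n ⟨2*(i:ℕ), by have := i.isLt; omega⟩)).prod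

/-! ### Combinatorial predicates -/

/-- `σ ∈ S_{{2f+1, …, n}}`, i.e. `σ` fixes `1, …, 2f` pointwise (0-based). -/
def FixLow (n f : ℕ) (σ : Equiv.Perm (Fin n)) : Prop :=
  ∀ a : Fin n, (a:ℕ) < 2*f → σ a = a

/-- `σ ∈ S_{2f} = S_{{1, …, 2f}}`, i.e. `σ` fixes `2f+1, …, n` pointwise (0-based). -/
def FixHigh (n f : ℕ) (σ : Equiv.Perm (Fin n)) : Prop :=
  ∀ a : Fin n, 2*f ≤ (a:ℕ) → σ a = a

/-- membership in `D_{ν_f}`:  the bitableau `t^{ν_f}·d` is row standard and the first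
column of its first component is increasing (everything 0-based; `d a` is the entry
at the cell of `t^{ν_f}` containing `a`). -/
def DnuP (n f : ℕ) (d : Equiv.Perm (Fin n)) : Prop :=
  (∀ a b : Fin n, (a:ℕ) % 2 = 0 → (b:ℕ) = (a:ℕ)+1 → (b:ℕ) < 2*f → d a < d b) ∧
  (∀ a b : Fin n, (a:ℕ) % 2 = 0 → (b:ℕ) % 2 = 0 → (a:ℕ) < (b:ℕ) → (b:ℕ) < 2*f → d a < d b) ∧
  (∀ a b : Fin n, 2*f ≤ (a:ℕ) → (b:ℕ) = (a:ℕ)+1 → d a < d b)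

/-- membership in `D_f = D_{ν_f} ∩ S_{2f}`. -/
def DfP (n f : ℕ) (d : Equiv.Perm (Fin n)) : Prop :=
  DnuP n f d ∧ FixHigh n f d

/-- membership in the row stabilizer `S_{(2^f)}` of the initial `(2^f)`-tableau
(whose rows are `{1,2}, {3,4}, …, {2f-1,2f}`), inside `S_{2f} ≤ S_n`. -/
def RowStabP (n f : ℕ) (w : Equiv.Perm (Fin n)) : Prop :=
  FixHigh n f w ∧ ∀ a : Fin n, ((w a : ℕ))/2 = (a:ℕ)/2

/-- membership in `Ψ`, the normalizer of `S_{(2^f)}` in `S_{2f}`. -/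
def PsiP (n f : ℕ) (z : Equiv.Perm (Fin n)) : Prop :=
  FixHigh n f z ∧ ∀ w, RowStabP n f w ↔ RowStabP n f (z * w * z⁻¹)

/-- `d_J` for a `2f`-element subset `J ⊆ {1, …, n}`:  the unique permutation
enumerating `J` increasingly on the first `2f` positions and the complement of `J`
increasingly on the remaining positions. -/
def IsdJ (n f : ℕ) (J : Finset (Fin n)) (d : Equiv.Perm (Fin n)) : Prop :=
  (∀ a : Fin n, ((a:ℕ) < 2*f → d a ∈ J) ∧ (2*f ≤ (a:ℕ) → d a ∉ J)) ∧
  (∀ a b : Fin n, (a:ℕ) < (b:ℕ) → (b:ℕ) < 2*f → d a < d b) ∧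
  (∀ a b : Fin n, 2*f ≤ (a:ℕ) → (a:ℕ) < (b:ℕ) → d a < d b)

/-- membership in `S_{(2f, n-2f)} = S_{{1,…,2f}} × S_{{2f+1,…,n}}`. -/
def BlockP (n f : ℕ) (d : Equiv.Perm (Fin n)) : Prop :=
  ∀ a : Fin n, (a:ℕ) < 2*f ↔ ((d a : ℕ)) < 2*f

/-- the multi-index `c = (1, 1', 2, 2', …, f, f')`, completed by an
arbitrary multi-index `kk` on the positions `> 2f`. -/
def cIdx (m n f : ℕ) (hfm : f ≤ m) (kk : Fin n → Fin (2*m)) : Fin n → Fin (2*m) :=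
  fun p => if h : (p:ℕ) < 2*f then
    (if (p:ℕ) % 2 = 0 then (⟨(p:ℕ)/2, by omega⟩ : Fin (2*m))
     else conjIdx m ⟨(p:ℕ)/2, by omega⟩)
  else kk p

/-- the multi-index `ĉ = (f+1, (f+1)', …, 2f, (2f)') ∈ I(2m, 2f)`. -/
def cHatIdx (m f : ℕ) (hfm : 2*f ≤ m) : Fin (2*f) → Fin (2*m) :=
  fun p => if (p:ℕ) % 2 = 0 then (⟨f + (p:ℕ)/2, by have := p.isLt; omega⟩ : Fin (2*m))
           else conjIdx m ⟨f + (p:ℕ)/2, by have := p.isLt; omega⟩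

/-- membership in `I_f` (only the values at positions `> 2f` matter):
`2f+1 ≤ kk p ≤ m` (1-based) for all positions `p > 2f`. -/
def IfP (m n f : ℕ) (kk : Fin n → Fin (2*m)) : Prop :=
  ∀ p : Fin n, 2*f ≤ (p:ℕ) → 2*f ≤ ((kk p : ℕ)) ∧ ((kk p : ℕ)) < m

/-- the weight of a multi-index. -/
def wtOf (m k : ℕ) (a : Fin k → Fin (2*m)) : Fin (2*m) → ℕ :=
  fun j => (Finset.univ.filter (fun p => a p = j)).card

/-- the weight-`μ` component of an element of tensor space. -/
def wcomp (R : Type) [CommRing R] (m k : ℕ) (μ : Fin (2*m) → ℕ) (w : Ten R m k) :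
    Ten R m k :=
  fun a => if wtOf m k a = μ then w a else 0

/-- partial sums of a partition. -/
def psum (l : ℕ → ℕ) (r : ℕ) : ℕ := ∑ i ∈ Finset.range r, l i

/-- `l` represents a partition of `n - 2f` (parts listed weakly decreasingly). -/
def PartP (n f : ℕ) (l : ℕ → ℕ) : Prop :=
  (∀ i, l (i+1) ≤ l i) ∧ psum l n = n - 2*f ∧ ∀ i, n ≤ i → l i = 0

/-- membership in the Young subgroup `S_λ ≤ S_{{2f+1, …, n}}` stabilizing the rows of
the initial `λ`-tableau `t^λ` (with entries `2f+1, …, n`). -/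
def InSlam (n f : ℕ) (l : ℕ → ℕ) (w : Equiv.Perm (Fin n)) : Prop :=
  (∀ a : Fin n, (a:ℕ) < 2*f → w a = a) ∧
  (∀ (a : Fin n) (r : ℕ), 2*f + psum l r ≤ (a:ℕ) → (a:ℕ) < 2*f + psum l (r+1) →
     2*f + psum l r ≤ ((w a : ℕ)) ∧ ((w a : ℕ)) < 2*f + psum l (r+1))

/-- `d = d(t)` for a standard `λ`-tableau `t` with entries `2f+1, …, n`, i.e.
`d ∈ S_{{2f+1,…,n}}` and `t^λ · d` is standard. -/
def StdP (n f : ℕ) (l : ℕ → ℕ) (d : Equiv.Perm (Fin n)) : Prop :=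
  FixLow n f d ∧
  (∀ (a b : Fin n) (r c : ℕ), (a:ℕ) = 2*f + psum l r + c → c+1 < l r →
     (b:ℕ) = (a:ℕ)+1 → d a < d b) ∧
  (∀ (a b : Fin n) (r c : ℕ), (a:ℕ) = 2*f + psum l r + c → c < l (r+1) →
     (b:ℕ) = 2*f + psum l (r+1) + c → d a < d b)

/-- the embedding of the index set of the basis of `V` into that of `Ṽ`
(`v_i ↦ ṽ_i`, `v_{i'} ↦ ṽ_{i'}`). -/
def embIdx (m m0 : ℕ) (h : m ≤ m0) : Fin (2*m) → Fin (2*m0) :=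
  fun j => if (j:ℕ) < m then ⟨(j:ℕ), by have := j.isLt; omega⟩
           else ⟨(j:ℕ) + 2*(m0 - m), by have := j.isLt; omega⟩

/-- the inclusion `V^{⊗n} ↪ Ṽ^{⊗n}`. -/
def inclT (R : Type) [CommRing R] (m m0 n : ℕ) (h : m ≤ m0) :
    Ten R m n →ₗ[R] Ten R m0 n :=
  funMap R _ _ (fun (b : Fin n → Fin (2*m0)) (a : Fin n → Fin (2*m)) =>
    if b = embIdx m m0 h ∘ a then 1 else 0)

/-- the projection `π_K : Ṽ^{⊗n} ↠ V^{⊗n}` killing all basis tensors containing a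
factor `ṽ_i` or `ṽ_{i'}` with `m+1 ≤ i ≤ m_0`. -/
def projT (R : Type) [CommRing R] (m m0 n : ℕ) (h : m ≤ m0) :
    Ten R m0 n →ₗ[R] Ten R m n :=
  funMap R _ _ (fun (a : Fin n → Fin (2*m)) (b : Fin n → Fin (2*m0)) =>
    if b = embIdx m m0 h ∘ a then 1 else 0)



/-!
Let `U` be the span of the basis tensors `v_a` in which no two entries of `a` are conjugate. The
`s_i` permute these tensors up to sign and the `e_i` kill them, so `U` is stable under `B_n` and
`B^{(1)}` kills it. Modulo `B^{(1)}` every element of `B_n` is a combination of words in the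
`s_i`; as the `s_i` satisfy the type `A` Coxeter relations, these words are the images of the
permutations `π`, and the image of `π` sends `v_c` to `± v_{c ∘ π}`. For `c = (1, …, n)`,
which lies in `U` because `m ≥ n`, these vectors are linearly independent, so an element
killing `v_c` has no component outside `B^{(1)}`.
-/

section AdjacentTranspositions

variable {n : ℕ}

def adjLo (i : Fin (n-1)) : Fin n := ⟨i, by omega⟩

def adjHi (i : Fin (n-1)) : Fin n := ⟨i + 1, by omega⟩

def adjSwap (i : Fin (n-1)) : Equiv.Perm (Fin n) := Equiv.swap (adjLo i) (adjHi i)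

@[simp] lemma val_adjLo (i : Fin (n-1)) : (adjLo i : ℕ) = i := rfl

@[simp] lemma val_adjHi (i : Fin (n-1)) : (adjHi i : ℕ) = i + 1 := rfl

lemma adjLo_ne_adjHi (i : Fin (n-1)) : adjLo i ≠ adjHi i := by simp [Fin.ext_iff]

@[simp] lemma adjSwap_adjLo (i : Fin (n-1)) : adjSwap i (adjLo i) = adjHi i :=
  Equiv.swap_apply_left _ _

@[simp] lemma adjSwap_adjHi (i : Fin (n-1)) : adjSwap i (adjHi i) = adjLo i :=
  Equiv.swap_apply_right _ _

@[simp] lemma adjSwap_adjSwap (i : Fin (n-1)) (p : Fin n) : adjSwap i (adjSwap i p) = p :=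
  Equiv.swap_apply_self _ _ _

@[simp] lemma adjSwap_mul_self (i : Fin (n-1)) : adjSwap i * adjSwap i = 1 :=
  Equiv.swap_mul_self _ _

lemma sign_adjSwap (i : Fin (n-1)) : Equiv.Perm.sign (adjSwap i) = -1 :=
  Equiv.Perm.sign_swap (adjLo_ne_adjHi i)

lemma adjSwap_apply_of_ne {i : Fin (n-1)} {p : Fin n} (h₁ : (p : ℕ) ≠ i)
    (h₂ : (p : ℕ) ≠ i + 1) : adjSwap i p = p :=
  Equiv.swap_apply_of_ne_of_ne (by simpa [Fin.ext_iff]) (by simpa [Fin.ext_iff])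

lemma val_adjSwap (i : Fin (n-1)) (p : Fin n) :
    (adjSwap i p : ℕ) =
      if (p : ℕ) = i then (i : ℕ) + 1 else if (p : ℕ) = i + 1 then (i : ℕ) else p := by
  by_cases h₁ : (p : ℕ) = i
  · rw [show p = adjLo i from Fin.ext h₁, adjSwap_adjLo]; simp
  by_cases h₂ : (p : ℕ) = i + 1
  · rw [show p = adjHi i from Fin.ext h₂, adjSwap_adjHi]; simp
  · simp [adjSwap_apply_of_ne h₁ h₂, h₁, h₂]

lemma adjSwap_lt_adjSwap {i : Fin (n-1)} {p q : Fin n} (hpq : p < q)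
    (hne : ¬(p = adjLo i ∧ q = adjHi i)) : adjSwap i p < adjSwap i q := by
  simp only [Fin.ext_iff, val_adjLo, val_adjHi] at hne
  rw [Fin.lt_def] at hpq ⊢
  rw [val_adjSwap, val_adjSwap]
  split_ifs <;> omega

lemma adjSwap_mul_adjSwap_mul_adjSwap (i j : Fin (n-1)) :
    adjSwap i * adjSwap j * adjSwap i = Equiv.swap (adjSwap i (adjLo j)) (adjSwap i (adjHi j)) := by
  rw [Equiv.swap_apply_apply]
  simp only [adjSwap, Equiv.swap_inv]

lemma adjSwap_comm {i j : Fin (n-1)} (h : (i : ℕ) + 1 < j) :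
    adjSwap i * adjSwap j = adjSwap j * adjSwap i := by
  have hconj : adjSwap i * adjSwap j * adjSwap i = adjSwap j := by
    rw [adjSwap_mul_adjSwap_mul_adjSwap, adjSwap_apply_of_ne (by simp; omega) (by simp; omega),
      adjSwap_apply_of_ne (by simp; omega) (by simp; omega)]
    rfl
  calc adjSwap i * adjSwap j = adjSwap i * adjSwap j * adjSwap i * adjSwap i := by
        rw [mul_assoc _ (adjSwap i), adjSwap_mul_self, mul_one]
    _ = adjSwap j * adjSwap i := by rw [hconj]

lemma adjSwap_braid {i j : Fin (n-1)} (h : (j : ℕ) = i + 1) :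
    adjSwap i * adjSwap j * adjSwap i = adjSwap j * adjSwap i * adjSwap j := by
  have hij : adjLo j = adjHi i := Fin.ext h
  rw [adjSwap_mul_adjSwap_mul_adjSwap, adjSwap_mul_adjSwap_mul_adjSwap, hij, ← hij,
    adjSwap_apply_of_ne (i := i) (p := adjHi j) (by simp; omega) (by simp; omega),
    adjSwap_apply_of_ne (i := j) (p := adjLo i) (by simp; omega) (by simp; omega), hij,
    adjSwap_adjHi, ← hij, adjSwap_adjLo]

def inversions (π : Equiv.Perm (Fin n)) : Finset (Fin n × Fin n) :=
  Finset.univ.filter fun pq => pq.1 < pq.2 ∧ π pq.2 < π pq.1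

lemma mem_inversions {π : Equiv.Perm (Fin n)} {pq : Fin n × Fin n} :
    pq ∈ inversions π ↔ pq.1 < pq.2 ∧ π pq.2 < π pq.1 := by
  simp [inversions]

def descents (π : Equiv.Perm (Fin n)) : Finset (Fin (n-1)) :=
  Finset.univ.filter fun i => π (adjHi i) < π (adjLo i)

lemma mem_descents {π : Equiv.Perm (Fin n)} {i : Fin (n-1)} :
    i ∈ descents π ↔ π (adjHi i) < π (adjLo i) := by
  simp [descents]

lemma mem_descents_mul_adjSwap_self {π : Equiv.Perm (Fin n)} {i : Fin (n-1)}
    (hi : i ∉ descents π) : i ∈ descents (π * adjSwap i) := by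
  rw [mem_descents, not_lt] at *
  simpa using lt_of_le_of_ne hi (π.injective.ne (adjLo_ne_adjHi i))

lemma mem_descents_mul_adjSwap_of_far {π : Equiv.Perm (Fin n)} {i j : Fin (n-1)}
    (h : (i : ℕ) + 1 < j ∨ (j : ℕ) + 1 < i) :
    i ∈ descents (π * adjSwap j) ↔ i ∈ descents π := by
  simp only [mem_descents, Equiv.Perm.mul_apply]
  rw [adjSwap_apply_of_ne (p := adjHi i) (by simp; omega) (by simp; omega),
    adjSwap_apply_of_ne (p := adjLo i) (by simp; omega) (by simp; omega)]

lemma card_inversions_mul_adjSwap_lt {π : Equiv.Perm (Fin n)} {i : Fin (n-1)}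
    (hi : i ∈ descents π) : (inversions (π * adjSwap i)).card < (inversions π).card := by
  rw [mem_descents] at hi
  have hmem : (adjLo i, adjHi i) ∈ inversions π :=
    mem_inversions.2 ⟨by simp [Fin.lt_def], hi⟩
  -- `(p, q) ↦ (τ p, τ q)` embeds the inversions of `π τ` into those of `π` but `(i, i+1)`.
  calc (inversions (π * adjSwap i)).card
      ≤ ((inversions π).erase (adjLo i, adjHi i)).card := by
        refine Finset.card_le_card_of_injOn ((adjSwap i).prodCongr (adjSwap i)) ?_
          ((adjSwap i).prodCongr (adjSwap i)).injective.injOn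
        rintro ⟨p, q⟩ hpq
        obtain ⟨hlt, hval⟩ : p < q ∧ π (adjSwap i q) < π (adjSwap i p) :=
          mem_inversions.1 hpq
        have hne : ¬(p = adjLo i ∧ q = adjHi i) := by
          rintro ⟨rfl, rfl⟩
          simp only [adjSwap_adjLo, adjSwap_adjHi] at hval
          exact hval.asymm hi
        refine Finset.mem_erase.2
          ⟨fun h => ?_, mem_inversions.2 ⟨adjSwap_lt_adjSwap hlt hne, hval⟩⟩
        obtain ⟨hp, hq⟩ := Prod.mk.inj h
        rw [← adjSwap_adjHi i, (adjSwap i).injective.eq_iff] at hp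
        rw [← adjSwap_adjLo i, (adjSwap i).injective.eq_iff] at hq
        subst hp hq
        simp [Fin.lt_def] at hlt
    _ < (inversions π).card := Finset.card_erase_lt_of_mem hmem

lemma eq_one_of_descents_eq_empty {π : Equiv.Perm (Fin n)} (h : descents π = ∅) : π = 1 := by
  have hmono : StrictMono π := by
    obtain _ | n := n
    · exact fun a => a.elim0
    refine Fin.strictMono_iff_lt_succ.2 fun i => ?_
    have hi : (⟨i, by simp⟩ : Fin (n + 1 - 1)) ∉ descents π := by simp [h]
    exact lt_of_not_ge fun hle => hi (mem_descents.2 (lt_of_le_of_ne hle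
      (π.injective.ne (adjLo_ne_adjHi _)).symm))
  exact Equiv.ext fun a => Fin.ext <| by
    simpa using Fin.coe_orderIso_apply (hmono.orderIsoOfSurjective π π.surjective) a

@[elab_as_elim]
theorem adjSwap_induction {P : Equiv.Perm (Fin n) → Prop} (one : P 1)
    (mul_adjSwap : ∀ π i, P π → P (π * adjSwap i)) (π : Equiv.Perm (Fin n)) : P π := by
  induction h : (inversions π).card using Nat.strong_induction_on generalizing π with
  | _ N ih =>
  rcases (descents π).eq_empty_or_nonempty with h₀ | ⟨i, hi⟩
  · rwa [eq_one_of_descents_eq_empty h₀]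
  · have := mul_adjSwap _ i (ih _ (h ▸ card_inversions_mul_adjSwap_lt hi) _ rfl)
    rwa [mul_assoc, adjSwap_mul_self, mul_one] at this

end AdjacentTranspositions

section CoxeterLift

variable {n : ℕ} {M : Type*} [Monoid M]

structure IsCoxeterA (t : Fin (n-1) → M) : Prop where
  mul_self : ∀ i, t i * t i = 1
  comm : ∀ i j : Fin (n-1), (i : ℕ) + 1 < j → t i * t j = t j * t i
  braid : ∀ i j : Fin (n-1), (j : ℕ) = i + 1 → t i * t j * t i = t j * t i * t j

/-- The image of the reduced word of `π` obtained by repeatedly splitting off the least descent;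
the Coxeter relations make the choice of descent irrelevant (`hasExchange_permLift`). -/
def permLift (t : Fin (n-1) → M) (π : Equiv.Perm (Fin n)) : M :=
  if h : (descents π).Nonempty then
    permLift t (π * adjSwap ((descents π).min' h)) * t ((descents π).min' h)
  else 1
termination_by (inversions π).card
decreasing_by exact card_inversions_mul_adjSwap_lt ((descents π).min'_mem h)

variable {t : Fin (n-1) → M}

lemma permLift_of_nonempty {π : Equiv.Perm (Fin n)} (h : (descents π).Nonempty) :
    permLift t π =
      permLift t (π * adjSwap ((descents π).min' h)) * t ((descents π).min' h) := by
  rw [permLift, dif_pos h]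

lemma permLift_one : permLift t (1 : Equiv.Perm (Fin n)) = 1 := by
  rw [permLift, dif_neg]
  simp [Finset.not_nonempty_iff_eq_empty, Finset.eq_empty_iff_forall_notMem, mem_descents,
    Fin.lt_def]

def HasExchange (t : Fin (n-1) → M) (π : Equiv.Perm (Fin n)) : Prop :=
  ∀ i ∈ descents π, permLift t π = permLift t (π * adjSwap i) * t i

lemma permLift_exchange_far {π : Equiv.Perm (Fin n)} {i j : Fin (n-1)} (ht : IsCoxeterA t)
    (hi : i ∈ descents π) (hj : j ∈ descents π) (hji : (j : ℕ) + 1 < i)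
    (ih : ∀ σ, (inversions σ).card < (inversions π).card → HasExchange t σ) :
    permLift t (π * adjSwap j) * t j = permLift t (π * adjSwap i) * t i := by
  rw [ih _ (card_inversions_mul_adjSwap_lt hj) i
      ((mem_descents_mul_adjSwap_of_far (Or.inr hji)).2 hi),
    ih _ (card_inversions_mul_adjSwap_lt hi) j
      ((mem_descents_mul_adjSwap_of_far (Or.inl hji)).2 hj),
    mul_assoc π, adjSwap_comm hji]
  simp only [mul_assoc, ht.comm j i hji]

lemma permLift_exchange_adjacent {π : Equiv.Perm (Fin n)} {i j : Fin (n-1)} (ht : IsCoxeterA t)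
    (hi : i ∈ descents π) (hj : j ∈ descents π) (hji : (i : ℕ) = j + 1)
    (ih : ∀ σ, (inversions σ).card < (inversions π).card → HasExchange t σ) :
    permLift t (π * adjSwap j) * t j = permLift t (π * adjSwap i) * t i := by
  have hb : adjLo i = adjHi j := Fin.ext hji
  have ha : adjSwap i (adjLo j) = adjLo j := adjSwap_apply_of_ne (by simp; omega) (by simp; omega)
  have hc : adjSwap j (adjHi i) = adjHi i := adjSwap_apply_of_ne (by simp; omega) (by simp; omega)
  have hba := mem_descents.1 hj
  have hcb := mem_descents.1 hi
  rw [hb] at hcb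
  have d₁ : i ∈ descents (π * adjSwap j) := by
    simpa [mem_descents, hb, hc] using hcb.trans hba
  have d₂ : j ∈ descents (π * adjSwap j * adjSwap i) := by
    simpa [mem_descents, ← hb, ha, hc] using hcb
  have d₃ : j ∈ descents (π * adjSwap i) := by
    simpa [mem_descents, ← hb, ha] using hcb.trans hba
  have d₄ : i ∈ descents (π * adjSwap i * adjSwap j) := by
    simpa [mem_descents, hb, ha, hc] using hba
  -- Both sides expand to the word of `π τ_j τ_i τ_j = π τ_i τ_j τ_i` times a braid word.
  have c₁ := card_inversions_mul_adjSwap_lt hj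
  have c₃ := card_inversions_mul_adjSwap_lt hi
  rw [ih _ c₁ i d₁, ih _ ((card_inversions_mul_adjSwap_lt d₁).trans c₁) j d₂,
    ih _ c₃ j d₃, ih _ ((card_inversions_mul_adjSwap_lt d₃).trans c₃) i d₄]
  simp only [mul_assoc]
  rw [← mul_assoc (adjSwap j), ← mul_assoc (adjSwap i), adjSwap_braid hji,
    ← mul_assoc (t i), ← mul_assoc (t j), ht.braid j i hji]

lemma hasExchange_permLift (ht : IsCoxeterA t) (π : Equiv.Perm (Fin n)) : HasExchange t π := by
  induction h : (inversions π).card using Nat.strong_induction_on generalizing π with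
  | _ N ih =>
  have ih' : ∀ σ, (inversions σ).card < (inversions π).card → HasExchange t σ :=
    fun σ hσ => ih _ (h ▸ hσ) σ rfl
  intro i hi
  have hne : (descents π).Nonempty := ⟨i, hi⟩
  rw [permLift_of_nonempty hne]
  set j := (descents π).min' hne
  have hj : j ∈ descents π := (descents π).min'_mem hne
  have hji : (j : ℕ) ≤ i := Fin.le_def.1 ((descents π).min'_le i hi)
  obtain hji | hji | hji : (j : ℕ) = i ∨ (i : ℕ) = j + 1 ∨ (j : ℕ) + 1 < i := by omega
  · rw [Fin.ext hji]
  · exact permLift_exchange_adjacent ht hi hj hji ih'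
  · exact permLift_exchange_far ht hi hj hji ih'

lemma permLift_mul_adjSwap (ht : IsCoxeterA t) (π : Equiv.Perm (Fin n)) (i : Fin (n-1)) :
    permLift t (π * adjSwap i) = permLift t π * t i := by
  by_cases hi : i ∈ descents π
  · rw [hasExchange_permLift ht π i hi, mul_assoc, ht.mul_self, mul_one]
  · have := hasExchange_permLift ht _ i (mem_descents_mul_adjSwap_self hi)
    rwa [mul_assoc, adjSwap_mul_self, mul_one] at this

lemma permLift_mul (ht : IsCoxeterA t) (π σ : Equiv.Perm (Fin n)) :
    permLift t (π * σ) = permLift t π * permLift t σ := by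
  induction σ using adjSwap_induction with
  | one => rw [mul_one, permLift_one, mul_one]
  | mul_adjSwap σ i ih =>
    rw [← mul_assoc, permLift_mul_adjSwap ht, permLift_mul_adjSwap ht, ih, mul_assoc]

def permLiftHom (ht : IsCoxeterA t) : Equiv.Perm (Fin n) →* M where
  toFun := permLift t
  map_one' := permLift_one
  map_mul' := permLift_mul ht

lemma permLiftHom_adjSwap (ht : IsCoxeterA t) (i : Fin (n-1)) :
    permLiftHom ht (adjSwap i) = t i := by
  have h := permLift_mul_adjSwap ht 1 i
  rw [one_mul, permLift_one, one_mul] at h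
  exact h

end CoxeterLift

section BrauerAlgebra

variable {R : Type} [CommRing R] {x : R} {n : ℕ}

theorem BrauerAlg.induction {P : BrauerAlg R x n → Prop}
    (algebraMap : ∀ r : R, P (algebraMap R (BrauerAlg R x n) r))
    (s : ∀ i, P (bS R x n i)) (e : ∀ i, P (bE R x n i))
    (add : ∀ a b, P a → P b → P (a + b)) (mul : ∀ a b, P a → P b → P (a * b))
    (z : BrauerAlg R x n) : P z := by
  obtain ⟨w, rfl⟩ := RingQuot.mkAlgHom_surjective R (BRel R x n) z
  induction w using FreeAlgebra.induction with
  | grade0 r => simpa only [AlgHom.commutes] using algebraMap r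
  | grade1 g => cases g with
    | s i => exact s i
    | e i => exact e i
  | add a b ha hb => simpa only [map_add] using add _ _ ha hb
  | mul a b ha hb => simpa only [map_mul] using mul _ _ ha hb

variable (R x n) in
theorem isCoxeterA_bS : IsCoxeterA (bS R x n) where
  mul_self i := by
    simpa only [bS, map_mul, map_one] using RingQuot.mkAlgHom_rel R (BRel.ss (x := x) i)
  comm i j h := by
    simpa only [bS, map_mul] using RingQuot.mkAlgHom_rel R (BRel.ssComm (x := x) i j h)
  braid i j h := by
    simpa only [bS, map_mul] using RingQuot.mkAlgHom_rel R (BRel.braid (x := x) i j h)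

lemma bE_mul_bE_mul_bE {i j : Fin (n-1)} (h : (j : ℕ) = i + 1) :
    bE R x n j * bE R x n i * bE R x n j = bE R x n j := by
  simpa only [bE, map_mul] using RingQuot.mkAlgHom_rel R (BRel.eje' (x := x) i j h)

lemma Bideal.mul_mem_left {f : ℕ} (z : BrauerAlg R x n) {v : BrauerAlg R x n}
    (hv : v ∈ Bideal R x n f) : z * v ∈ Bideal R x n f := by
  refine (Submodule.span_le (p := (Bideal R x n f).comap (LinearMap.mulLeft R z))).2 ?_ hv
  rintro _ ⟨hf, a, b, rfl⟩
  exact Submodule.subset_span ⟨hf, z * a, b, by simp only [LinearMap.mulLeft_apply, mul_assoc]⟩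

lemma Bideal.mul_mem_right {f : ℕ} (z : BrauerAlg R x n) {v : BrauerAlg R x n}
    (hv : v ∈ Bideal R x n f) : v * z ∈ Bideal R x n f := by
  refine (Submodule.span_le (p := (Bideal R x n f).comap (LinearMap.mulRight R z))).2 ?_ hv
  rintro _ ⟨hf, a, b, rfl⟩
  exact Submodule.subset_span ⟨hf, a, b * z, by simp only [LinearMap.mulRight_apply, mul_assoc]⟩

lemma EfB_one (hf : 2 * 1 ≤ n) : EfB R x n 1 hf = bE R x n ⟨0, by omega⟩ := by
  simp [EfB]

lemma bE_mem_Bideal_one (i : Fin (n-1)) : bE R x n i ∈ Bideal R x n 1 := by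
  obtain ⟨k, hk⟩ := i
  induction k with
  | zero => exact Submodule.subset_span ⟨by omega, 1, 1, by rw [EfB_one, one_mul, mul_one]⟩
  | succ k ih =>
    rw [← bE_mul_bE_mul_bE (i := ⟨k, by omega⟩) rfl]
    exact Bideal.mul_mem_right _ (Bideal.mul_mem_left _ (ih (by omega)))

theorem mem_adjoin_bS_sup_Bideal_one (z : BrauerAlg R x n) :
    z ∈ Subalgebra.toSubmodule (Algebra.adjoin R (Set.range (bS R x n))) ⊔ Bideal R x n 1 := by
  induction z using BrauerAlg.induction with
  | algebraMap r => exact Submodule.mem_sup_left (Subalgebra.algebraMap_mem _ r)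
  | s i => exact Submodule.mem_sup_left (Algebra.subset_adjoin ⟨i, rfl⟩)
  | e i => exact Submodule.mem_sup_right (bE_mem_Bideal_one i)
  | add a b ha hb => exact Submodule.add_mem _ ha hb
  | mul a b ha hb =>
    obtain ⟨u₁, hu₁, v₁, hv₁, rfl⟩ := Submodule.mem_sup.1 ha
    obtain ⟨u₂, hu₂, v₂, hv₂, rfl⟩ := Submodule.mem_sup.1 hb
    rw [add_mul, mul_add, add_assoc]
    exact Submodule.add_mem_sup (Subalgebra.mul_mem _ hu₁ hu₂)
      (add_mem (Bideal.mul_mem_left _ hv₂) (Bideal.mul_mem_right _ hv₁))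

lemma adjoin_bS_le_span_permLift :
    Subalgebra.toSubmodule (Algebra.adjoin R (Set.range (bS R x n))) ≤
      Submodule.span R (Set.range (permLiftHom (isCoxeterA_bS R x n))) := by
  rw [Algebra.adjoin_eq_span, ← MonoidHom.coe_mrange]
  refine Submodule.span_mono (Submonoid.closure_le.2 ?_)
  rintro _ ⟨i, rfl⟩
  exact ⟨adjSwap i, permLiftHom_adjSwap _ i⟩

end BrauerAlgebra

section TensorSpace

variable {R : Type} [CommRing R] {m n : ℕ}

lemma dta_eq_single (a : Fin n → Fin (2*m)) : dta R m n a = Pi.single a 1 := by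
  funext b
  simp [dta, Pi.single_apply]

lemma funMap_single {α β : Type} [Fintype α] [DecidableEq α] (M : β → α → R) (a : α) :
    funMap R α β M (Pi.single a 1) = fun b => M b a := by
  funext b
  simp [funMap, Pi.single_apply]

lemma sOp_dta (j : Fin (n-1)) (a : Fin n → Fin (2*m)) :
    sOp R m n j (dta R m n a) = -dta R m n (a ∘ adjSwap j) := by
  have hiff (b : Fin n → Fin (2*m)) : a = b ∘ adjSwap j ↔ b = a ∘ adjSwap j := by
    constructor <;> rintro rfl <;> funext p <;> simp
  funext b
  rw [dta_eq_single, dta_eq_single, sOp, funMap_single]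
  change (if a = b ∘ adjSwap j then (-1 : R) else 0) = _
  by_cases hb : b = a ∘ adjSwap j <;> simp [hiff, hb]

lemma epsZ_eq_zero_of_ne_conjIdx {i j : Fin (2*m)} (h : j ≠ conjIdx m i) : epsZ m i j = 0 := by
  rw [epsZ, if_neg]
  intro hij
  exact h (Fin.ext (by simp only [conjIdx]; omega))

lemma eOp_dta_of_ne_conjIdx (j : Fin (n-1)) (a : Fin n → Fin (2*m))
    (h : a (adjHi j) ≠ conjIdx m (a (adjLo j))) : eOp R m n j (dta R m n a) = 0 := by
  have hε := epsZ_eq_zero_of_ne_conjIdx h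
  simp only [adjLo, adjHi] at hε
  funext b
  rw [dta_eq_single, eOp, funMap_single]
  simp [hε]

def IsConjFree (a : Fin n → Fin (2*m)) : Prop :=
  ∀ p q, a q ≠ conjIdx m (a p)

variable (R m n) in
def conjFreeSpan : Submodule R (Ten R m n) :=
  Submodule.span R (dta R m n '' {a | IsConjFree a})

lemma dta_mem_conjFreeSpan {a : Fin n → Fin (2*m)} (ha : IsConjFree a) :
    dta R m n a ∈ conjFreeSpan R m n :=
  Submodule.subset_span ⟨a, ha, rfl⟩

lemma sOp_mem_conjFreeSpan (j : Fin (n-1)) {u : Ten R m n} (hu : u ∈ conjFreeSpan R m n) :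
    sOp R m n j u ∈ conjFreeSpan R m n := by
  refine (Submodule.span_le (p := (conjFreeSpan R m n).comap (sOp R m n j))).2 ?_ hu
  rintro _ ⟨a, ha, rfl⟩
  rw [SetLike.mem_coe, Submodule.mem_comap, sOp_dta]
  exact neg_mem (dta_mem_conjFreeSpan fun p q => ha _ _)

lemma eOp_eq_zero_of_mem_conjFreeSpan (j : Fin (n-1)) {u : Ten R m n}
    (hu : u ∈ conjFreeSpan R m n) : eOp R m n j u = 0 := by
  refine (Submodule.span_le (p := LinearMap.ker (eOp R m n j))).2 ?_ hu
  rintro _ ⟨a, ha, rfl⟩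
  exact eOp_dta_of_ne_conjIdx j a (ha _ _)

end TensorSpace

section Action

variable {R : Type} [CommRing R] {x : R} {m n : ℕ}
  {φ : (BrauerAlg R x n)ᵐᵒᵖ →ₐ[R] Module.End R (Ten R m n)}

variable (φ) in
def actionOn (u : Ten R m n) : BrauerAlg R x n →ₗ[R] Ten R m n :=
  LinearMap.applyₗ u ∘ₗ φ.toLinearMap ∘ₗ (MulOpposite.opLinearEquiv R).toLinearMap

lemma actionOn_apply (u : Ten R m n) (z : BrauerAlg R x n) : actionOn φ u z = φ (op z) u := rfl

lemma action_mem_conjFreeSpan (hs : ∀ i, φ (op (bS R x n i)) = sOp R m n i)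
    (he : ∀ i, φ (op (bE R x n i)) = eOp R m n i) (z : BrauerAlg R x n) {u : Ten R m n}
    (hu : u ∈ conjFreeSpan R m n) : φ (op z) u ∈ conjFreeSpan R m n := by
  induction z using BrauerAlg.induction generalizing u with
  | algebraMap r =>
    rw [← MulOpposite.algebraMap_apply, AlgHom.commutes, Module.algebraMap_end_apply]
    exact Submodule.smul_mem _ r hu
  | s i => rw [hs]; exact sOp_mem_conjFreeSpan i hu
  | e i => rw [he, eOp_eq_zero_of_mem_conjFreeSpan i hu]; exact zero_mem _
  | add a b ha hb => rw [op_add, map_add, LinearMap.add_apply]; exact add_mem (ha hu) (hb hu)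
  | mul a b ha hb => rw [op_mul, map_mul, Module.End.mul_apply]; exact hb (ha hu)

lemma action_eq_zero_of_mem_Bideal_one (hs : ∀ i, φ (op (bS R x n i)) = sOp R m n i)
    (he : ∀ i, φ (op (bE R x n i)) = eOp R m n i) {v : BrauerAlg R x n}
    (hv : v ∈ Bideal R x n 1) {u : Ten R m n} (hu : u ∈ conjFreeSpan R m n) :
    φ (op v) u = 0 := by
  refine (Submodule.span_le (p := LinearMap.ker (actionOn φ u))).2 ?_ hv
  rintro _ ⟨hf, a, b, rfl⟩
  rw [SetLike.mem_coe, LinearMap.mem_ker, actionOn_apply, op_mul, op_mul, map_mul, map_mul,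
    Module.End.mul_apply, Module.End.mul_apply, EfB_one, he,
    eOp_eq_zero_of_mem_conjFreeSpan _ (action_mem_conjFreeSpan hs he a hu), map_zero]

lemma action_permLift_dta (hs : ∀ i, φ (op (bS R x n i)) = sOp R m n i)
    (π : Equiv.Perm (Fin n)) (a : Fin n → Fin (2*m)) :
    φ (op (permLiftHom (isCoxeterA_bS R x n) π)) (dta R m n a) =
      ((Equiv.Perm.sign π : ℤ) : R) • dta R m n (a ∘ π) := by
  induction π using adjSwap_induction with
  | one => simp
  | mul_adjSwap π i ih =>
    rw [map_mul, permLiftHom_adjSwap, op_mul, map_mul, Module.End.mul_apply, ih, map_smul, hs,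
      sOp_dta, Equiv.Perm.sign_mul, sign_adjSwap, Equiv.Perm.coe_mul, ← Function.comp_assoc]
    simp

lemma eq_zero_of_action_dta_eq_zero (hs : ∀ i, φ (op (bS R x n i)) = sOp R m n i)
    {c : Fin n → Fin (2*m)} (hc : Function.Injective c) {u : BrauerAlg R x n}
    (hu : u ∈ Submodule.span R (Set.range (permLiftHom (isCoxeterA_bS R x n))))
    (h : φ (op u) (dta R m n c) = 0) : u = 0 := by
  obtain ⟨coef, rfl⟩ := (Submodule.mem_span_range_iff_exists_fun R).1 hu
  have hindep : LinearIndependent R fun π : Equiv.Perm (Fin n) => dta R m n (c ∘ π) := by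
    simpa only [dta_eq_single, Function.comp_def] using
      (Pi.linearIndependent_single_one _ R).comp (fun π : Equiv.Perm (Fin n) => c ∘ π)
        fun π σ hπσ => Equiv.ext fun p => hc (congrFun hπσ p)
  have hcoef : ∀ π, coef π * (Equiv.Perm.sign π : ℤ) = 0 := by
    refine Fintype.linearIndependent_iff.1 hindep _ ?_
    rw [← actionOn_apply, map_sum] at h
    simpa [actionOn_apply, action_permLift_dta hs, smul_smul] using h
  have hu0 (π : Equiv.Perm (Fin n)) : coef π = 0 := by
    simpa [mul_assoc, ← Int.cast_mul, ← Units.val_mul] using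
      congrArg (· * ((Equiv.Perm.sign π : ℤ) : R)) (hcoef π)
  simp [hu0]

end Action

theorem annihilator_in_B1_general
    (K : Type) [Field K] (m n : ℕ) (hmn : n ≤ m)
    (φ : (BrauerAlg K (-(2*m : K)) n)ᵐᵒᵖ →ₐ[K] Module.End K (Ten K m n))
    (hs : ∀ i, φ (op (bS K (-(2*m : K)) n i)) = sOp K m n i)
    (he : ∀ i, φ (op (bE K (-(2*m : K)) n i)) = eOp K m n i) :
    ∀ y : BrauerAlg K (-(2*m : K)) n,
      φ (op y) = 0 → y ∈ Bideal K (-(2*m : K)) n 1 := by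
  intro y hy
  let c : Fin n → Fin (2*m) := fun p => ⟨p, by omega⟩
  have hc : IsConjFree c := fun p q h => by
    simp only [c, conjIdx, Fin.ext_iff] at h
    omega
  have hc_inj : Function.Injective c := fun p q h => by simpa [c, Fin.ext_iff] using h
  obtain ⟨u, hu, v, hv, rfl⟩ := Submodule.mem_sup.1 (mem_adjoin_bS_sup_Bideal_one y)
  have hv0 : φ (op v) (dta K m n c) = 0 :=
    action_eq_zero_of_mem_Bideal_one hs he hv (dta_mem_conjFreeSpan hc)
  have hu0 : u = 0 := by
    refine eq_zero_of_action_dta_eq_zero hs hc_inj (adjoin_bS_le_span_permLift hu) ?_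
    simpa [hv0] using LinearMap.congr_fun hy (dta K m n c)
  rwa [hu0, zero_add]

/-- Let `K` be a field and `m ≥ n`.  Then the annihilator of tensor
space in the Brauer algebra is contained in the two-sided ideal `B^{(1)}` generated
by `e_1`. -/
theorem annihilator_in_B1
    (K : Type) [Field K] (m n : ℕ) (hn : 0 < n) (hmn : n ≤ m)
    (φ : (BrauerAlg K (-(2*m : K)) n)ᵐᵒᵖ →ₐ[K] Module.End K (Ten K m n))
    (hs : ∀ i, φ (op (bS K (-(2*m : K)) n i)) = sOp K m n i)
    (he : ∀ i, φ (op (bE K (-(2*m : K)) n i)) = eOp K m n i) :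
    ∀ y : BrauerAlg K (-(2*m : K)) n,
      φ (op y) = 0 → y ∈ Bideal K (-(2*m : K)) n 1 :=
  annihilator_in_B1_general K m n hmn φ hs he

end SpBrauer
end
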